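/- For every b > 0, if s_b > 0 then β_ν(s_b) = b·s_b (Lemma 2.4, second part). -/

import Mathlib

open MeasureTheory Filter
open scoped ENNReal

noncomputable section

/-- The half-open unit cube `(0,1]^m`. -/
def unitCube (m : ℕ) : Set (Fin m → ℝ) := {x | ∀ i, x i ∈ Set.Ioc (0 : ℝ) 1}

/-- The half-open dyadic cube of generation `n` indexed by `l ∈ ℤ^m`. -/
def dyadicCube (m n : ℕ) (l : Fin m → ℤ) : Set (Fin m → ℝ) :=
  {x | ∀ i, x i ∈ Set.Ioc ((l i : ℝ) / 2 ^ n) (((l i : ℝ) + 1) / 2 ^ n)}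

/-- `β_n^ν(s) = log (∑_{C ∈ 𝒟_n} ν(C)^s) / log (2^n)`, the sum running over all
dyadic cubes of generation `n` with positive `ν`-measure. -/
def betaN (m : ℕ) (ν : Measure (Fin m → ℝ)) (n : ℕ) (s : ℝ) : ℝ :=
  Real.log (∑' l : {l : Fin m → ℤ // 0 < ν (dyadicCube m n l)},
      (ν (dyadicCube m n l.1)).toReal ^ s) / Real.log ((2 : ℝ) ^ n)

/-- The `L^q`-spectrum `β_ν(s) = limsup_n β_n^ν(s)`. -/
def lqSpectrum (m : ℕ) (ν : Measure (Fin m → ℝ)) (s : ℝ) : ℝ :=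
  limsup (fun n => betaN m ν n s) atTop

/-- `s_b = inf {s > 0 : β_ν(s) - b·s ≤ 0}`. -/
def sb (m : ℕ) (ν : Measure (Fin m → ℝ)) (b : ℝ) : ℝ :=
  sInf {s : ℝ | 0 < s ∧ lqSpectrum m ν s - b * s ≤ 0}

/-!
Each `β_n^ν` is convex: `s ↦ log ∑_C ν(C)^s` is convex by Hölder's inequality. For `s ≥ 0` the
values `β_n^ν(s)` lie in `[-m s, m]`, because at most `2^{nm}` cubes of generation `n` carry mass
and one of them carries at least `2^{-nm}`. A limsup of pointwise bounded convex functions is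
convex, so `β_ν` is convex on `[0, ∞)` and hence continuous on `(0, ∞)`. Then `s ↦ β_ν(s) - b s`
is continuous at `s_b > 0`, nonpositive on its sublevel set, which accumulates at `s_b`, and
positive on `(0, s_b)`, so it vanishes at `s_b`.
-/

open Set

section LogSumRpow

variable {ι : Type*} [Fintype ι] {a : ι → ℝ}

theorem convexOn_log_sum_rpow [Nonempty ι] (ha : ∀ i, 0 < a i) :
    ConvexOn ℝ univ fun s : ℝ => Real.log (∑ i, a i ^ s) := by
  refine convexOn_iff_forall_pos.mpr ⟨convex_univ, fun s _ t _ θ η hθ hη hθη => ?_⟩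
  have hsum (u : ℝ) : 0 < ∑ i, a i ^ u :=
    Finset.sum_pos (fun i _ => Real.rpow_pos_of_pos (ha i) u) Finset.univ_nonempty
  have holder : ∑ i, a i ^ (θ * s + η * t) ≤ (∑ i, a i ^ s) ^ θ * (∑ i, a i ^ t) ^ η := by
    have h := Real.inner_le_Lp_mul_Lq_of_nonneg Finset.univ
      (Real.holderConjugate_one_div hθ hη hθη) (f := fun i => a i ^ (θ * s))
      (g := fun i => a i ^ (η * t)) (fun i _ => Real.rpow_nonneg (ha i).le _)
      (fun i _ => Real.rpow_nonneg (ha i).le _)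
    simp only [← Real.rpow_mul (ha _).le, one_div_one_div] at h
    simpa only [Real.rpow_add (ha _), mul_one_div, mul_div_cancel_left₀ _ hθ.ne',
      mul_div_cancel_left₀ _ hη.ne'] using h
  calc Real.log (∑ i, a i ^ (θ • s + η • t))
      ≤ Real.log ((∑ i, a i ^ s) ^ θ * (∑ i, a i ^ t) ^ η) := Real.log_le_log (hsum _) holder
    _ = θ • Real.log (∑ i, a i ^ s) + η • Real.log (∑ i, a i ^ t) := by
      rw [Real.log_mul (Real.rpow_pos_of_pos (hsum s) θ).ne' (Real.rpow_pos_of_pos (hsum t) η).ne',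
        Real.log_rpow (hsum s), Real.log_rpow (hsum t), smul_eq_mul, smul_eq_mul]

theorem log_sum_rpow_le_log_card [Nonempty ι] (ha : ∀ i, 0 < a i) (ha₁ : ∀ i, a i ≤ 1) {s : ℝ}
    (hs : 0 ≤ s) : Real.log (∑ i, a i ^ s) ≤ Real.log (Fintype.card ι) := by
  refine Real.log_le_log
    (Finset.sum_pos (fun i _ => Real.rpow_pos_of_pos (ha i) s) Finset.univ_nonempty) ?_
  calc ∑ i, a i ^ s ≤ ∑ _i : ι, (1 : ℝ) :=
        Finset.sum_le_sum fun i _ => Real.rpow_le_one (ha i).le (ha₁ i) hs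
    _ = Fintype.card ι := by simp

theorem neg_mul_log_card_le_log_sum_rpow [Nonempty ι] (ha : ∀ i, 0 < a i) (h₁ : 1 ≤ ∑ i, a i)
    {s : ℝ} (hs : 0 ≤ s) : -(s * Real.log (Fintype.card ι)) ≤ Real.log (∑ i, a i ^ s) := by
  have hcard : (0 : ℝ) < Fintype.card ι := by exact_mod_cast Fintype.card_pos
  obtain ⟨i, -, hi⟩ : ∃ i ∈ Finset.univ, (Fintype.card ι : ℝ)⁻¹ ≤ a i :=
    Finset.exists_le_of_sum_le Finset.univ_nonempty (by simpa [hcard.ne'] using h₁)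
  calc -(s * Real.log (Fintype.card ι)) = Real.log ((Fintype.card ι : ℝ)⁻¹ ^ s) := by
        rw [Real.log_rpow (inv_pos.mpr hcard), Real.log_inv, mul_neg]
    _ ≤ Real.log (a i ^ s) :=
        Real.log_le_log (by positivity) (Real.rpow_le_rpow (by positivity) hi hs)
    _ ≤ Real.log (∑ j, a j ^ s) :=
        Real.log_le_log (Real.rpow_pos_of_pos (ha i) s)
          (Finset.single_le_sum (fun j _ => Real.rpow_nonneg (ha j).le s) (Finset.mem_univ i))

end LogSumRpow

theorem convexOn_limsup {ι E : Type*} [AddCommGroup E] [Module ℝ E] {l : Filter ι} [l.NeBot]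
    {S : Set E} {f : ι → E → ℝ} (hf : ∀ i, ConvexOn ℝ S (f i))
    (hle : ∀ x ∈ S, IsBoundedUnder (· ≤ ·) l fun i => f i x)
    (hge : ∀ x ∈ S, IsBoundedUnder (· ≥ ·) l fun i => f i x) :
    ConvexOn ℝ S fun x => limsup (fun i => f i x) l := by
  obtain ⟨i₀⟩ := l.nonempty_of_neBot
  refine ⟨(hf i₀).1, fun x hx y hy a b ha hb hab => le_of_forall_pos_le_add fun ε hε => ?_⟩
  have hx' : ∀ᶠ i in l, f i x < limsup (fun i => f i x) l + ε :=
    eventually_lt_of_limsup_lt (lt_add_of_pos_right _ hε) (hle x hx)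
  have hy' : ∀ᶠ i in l, f i y < limsup (fun i => f i y) l + ε :=
    eventually_lt_of_limsup_lt (lt_add_of_pos_right _ hε) (hle y hy)
  refine limsup_le_of_le (hge _ ((hf i₀).1 hx hy ha hb hab)).isCoboundedUnder_le ?_
  filter_upwards [hx', hy'] with i hix hiy
  calc f i (a • x + b • y) ≤ a • f i x + b • f i y := (hf i).2 hx hy ha hb hab
    _ ≤ a * (limsup (fun i => f i x) l + ε) + b * (limsup (fun i => f i y) l + ε) := by
      simp only [smul_eq_mul]; gcongr
    _ = a • limsup (fun i => f i x) l + b • limsup (fun i => f i y) l + ε := by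
      simp only [smul_eq_mul]; linear_combination ε * hab

theorem apply_sInf_setOf_nonpos_eq_zero {f : ℝ → ℝ} (hf : ContinuousOn f (Ioi 0))
    (h : 0 < sInf {s | 0 < s ∧ f s ≤ 0}) : f (sInf {s | 0 < s ∧ f s ≤ 0}) = 0 := by
  set A := {s | 0 < s ∧ f s ≤ 0}
  have hne : A.Nonempty := by
    by_contra hA
    rw [not_nonempty_iff_eq_empty.mp hA, Real.sInf_empty] at h
    exact h.false
  have hbdd : BddBelow A := ⟨0, fun s hs => hs.1.le⟩
  have hcont : ContinuousAt f (sInf A) := hf.continuousAt (Ioi_mem_nhds h)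
  refine le_antisymm (hcont.continuousWithinAt.closure_le (csInf_mem_closure hne hbdd)
    continuousWithinAt_const fun s hs => hs.2) ?_
  refine continuousWithinAt_const.closure_le (s := Ioo 0 (sInf A))
    (by rw [closure_Ioo h.ne]; exact ⟨h.le, le_rfl⟩) hcont.continuousWithinAt fun t ht => ?_
  by_contra! hft
  exact (csInf_le hbdd ⟨ht.1, hft.le⟩).not_gt ht.2

section DyadicCubes

variable {m : ℕ}

theorem measurableSet_unitCube : MeasurableSet (unitCube m) := by
  have h : unitCube m = univ.pi fun _ => Ioc (0 : ℝ) 1 := by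
    ext x
    simp [unitCube, Set.mem_pi]
  rw [h]
  exact MeasurableSet.univ_pi fun _ => measurableSet_Ioc

theorem iUnion_dyadicCube (n : ℕ) : ⋃ l, dyadicCube m n l = univ := by
  refine eq_univ_of_forall fun x => mem_iUnion.mpr ⟨fun i => ⌈x i * 2 ^ n⌉ - 1, fun i => ?_⟩
  have hp : (0 : ℝ) < 2 ^ n := by positivity
  have hc₁ := Int.ceil_lt_add_one (x i * 2 ^ n)
  have hc₂ := Int.le_ceil (x i * 2 ^ n)
  push_cast
  constructor
  · rw [div_lt_iff₀ hp]
    linarith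
  · rw [le_div_iff₀ hp]
    linarith

theorem mem_Ico_of_dyadicCube_inter_unitCube {n : ℕ} {l : Fin m → ℤ}
    (h : (dyadicCube m n l ∩ unitCube m).Nonempty) (i : Fin m) : l i ∈ Ico 0 (2 ^ n) := by
  obtain ⟨x, hxC, hxU⟩ := h
  obtain ⟨hlo, hhi⟩ := hxC i
  obtain ⟨hpos, hle⟩ := hxU i
  have hp : (0 : ℝ) < 2 ^ n := by positivity
  rw [div_lt_iff₀ hp] at hlo
  rw [le_div_iff₀ hp] at hhi
  have h₁ : (-1 : ℝ) < l i := by linarith [mul_pos hpos hp]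
  have h₂ : (l i : ℝ) < 2 ^ n := by nlinarith
  constructor
  · have : (-1 : ℤ) < l i := by exact_mod_cast h₁
    omega
  · exact_mod_cast h₂

variable {ν : Measure (Fin m → ℝ)} [IsProbabilityMeasure ν]

theorem inter_unitCube_nonempty_of_measure_pos (hν : ν (unitCube m) = 1)
    {s : Set (Fin m → ℝ)} (hs : 0 < ν s) : (s ∩ unitCube m).Nonempty := by
  have hcompl : ν (unitCube m)ᶜ = 0 := by
    rw [measure_compl measurableSet_unitCube (measure_ne_top ν _), hν, measure_univ, tsub_self]
  by_contra h
  rw [not_nonempty_iff_eq_empty, ← disjoint_iff_inter_eq_empty] at h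
  exact hs.ne' (measure_mono_null h.subset_compl_right hcompl)

theorem setOf_measure_dyadicCube_pos_subset (hν : ν (unitCube m) = 1) (n : ℕ) :
    {l | 0 < ν (dyadicCube m n l)} ⊆
      ↑(Fintype.piFinset fun _ : Fin m => Finset.Ico (0 : ℤ) (2 ^ n)) :=
  fun _ hl => Fintype.mem_piFinset.mpr fun i => Finset.mem_Ico.mpr
    (mem_Ico_of_dyadicCube_inter_unitCube (inter_unitCube_nonempty_of_measure_pos hν hl) i)

theorem finite_measure_dyadicCube_pos (hν : ν (unitCube m) = 1) (n : ℕ) :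
    Finite {l // 0 < ν (dyadicCube m n l)} :=
  ((Finset.finite_toSet _).subset (setOf_measure_dyadicCube_pos_subset hν n)).to_subtype

theorem card_measure_dyadicCube_pos_le (hν : ν (unitCube m) = 1) (n : ℕ)
    [Fintype {l // 0 < ν (dyadicCube m n l)}] :
    Fintype.card {l // 0 < ν (dyadicCube m n l)} ≤ 2 ^ (n * m) := by
  rw [← Nat.card_eq_fintype_card]
  change Set.ncard {l | 0 < ν (dyadicCube m n l)} ≤ _
  calc Set.ncard {l | 0 < ν (dyadicCube m n l)}
      ≤ (Fintype.piFinset fun _ : Fin m => Finset.Ico (0 : ℤ) (2 ^ n) : Set _).ncard :=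
        Set.ncard_le_ncard (setOf_measure_dyadicCube_pos_subset hν n) (Finset.finite_toSet _)
    _ = 2 ^ (n * m) := by
        rw [Set.ncard_coe_finset, Fintype.card_piFinset]
        simp [pow_mul, Int.toNat_pow_of_nonneg]

theorem nonempty_measure_dyadicCube_pos (n : ℕ) : Nonempty {l // 0 < ν (dyadicCube m n l)} := by
  rw [nonempty_subtype]
  by_contra! h
  have hnull := measure_iUnion_null fun l => nonpos_iff_eq_zero.mp (h l)
  rw [iUnion_dyadicCube, measure_univ] at hnull
  exact one_ne_zero hnull

theorem one_le_sum_measure_dyadicCube_pos (n : ℕ) [Fintype {l // 0 < ν (dyadicCube m n l)}] :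
    1 ≤ ∑ l : {l // 0 < ν (dyadicCube m n l)}, (ν (dyadicCube m n l.1)).toReal := by
  have hcover : 1 ≤ ∑ l : {l // 0 < ν (dyadicCube m n l)}, ν (dyadicCube m n l.1) := calc
    1 = ν (⋃ l, dyadicCube m n l) := by rw [iUnion_dyadicCube, measure_univ]
    _ ≤ ∑' l, ν (dyadicCube m n l) := measure_iUnion_le _
    _ = ∑' l : {l // 0 < ν (dyadicCube m n l)}, ν (dyadicCube m n l.1) :=
        (tsum_subtype_eq_of_support_subset fun _ hl => pos_iff_ne_zero.mpr hl).symm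
    _ = _ := tsum_fintype _
  rw [← ENNReal.toReal_sum fun l _ => measure_ne_top ν _]
  exact ENNReal.toReal_one ▸
    ENNReal.toReal_mono (ENNReal.sum_ne_top.mpr fun l _ => measure_ne_top ν _) hcover

end DyadicCubes

section Spectrum

variable {m : ℕ} {ν : Measure (Fin m → ℝ)}

theorem betaN_eq {n : ℕ} [Fintype {l // 0 < ν (dyadicCube m n l)}] (s : ℝ) :
    betaN m ν n s = Real.log (∑ l : {l // 0 < ν (dyadicCube m n l)},
      (ν (dyadicCube m n l.1)).toReal ^ s) / (n * Real.log 2) := by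
  rw [betaN, tsum_fintype, Real.log_pow]

variable [IsProbabilityMeasure ν]

theorem convexOn_betaN (hν : ν (unitCube m) = 1) (n : ℕ) : ConvexOn ℝ univ (betaN m ν n) := by
  have := finite_measure_dyadicCube_pos hν n
  have := Fintype.ofFinite {l // 0 < ν (dyadicCube m n l)}
  have := nonempty_measure_dyadicCube_pos (ν := ν) n
  refine ((convexOn_log_sum_rpow (a := fun l : {l // 0 < ν (dyadicCube m n l)} =>
    (ν (dyadicCube m n l.1)).toReal) fun l => ENNReal.toReal_pos l.2.ne' (measure_ne_top ν _)).smul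
    (inv_nonneg.mpr (by positivity : (0 : ℝ) ≤ n * Real.log 2))).congr fun s _ => ?_
  simp only [betaN_eq, smul_eq_mul, div_eq_inv_mul]

theorem log_card_measure_dyadicCube_pos_le (hν : ν (unitCube m) = 1) (n : ℕ)
    [Fintype {l // 0 < ν (dyadicCube m n l)}] :
    Real.log (Fintype.card {l // 0 < ν (dyadicCube m n l)}) ≤ m * (n * Real.log 2) := by
  have := nonempty_measure_dyadicCube_pos (ν := ν) n
  calc Real.log (Fintype.card {l // 0 < ν (dyadicCube m n l)})
      ≤ Real.log ((2 : ℝ) ^ (n * m)) :=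
        Real.log_le_log (by exact_mod_cast Fintype.card_pos)
          (by exact_mod_cast card_measure_dyadicCube_pos_le hν n)
    _ = m * (n * Real.log 2) := by
        rw [Real.log_pow]
        push_cast
        ring

theorem betaN_le (hν : ν (unitCube m) = 1) (n : ℕ) {s : ℝ} (hs : 0 ≤ s) : betaN m ν n s ≤ m := by
  have := finite_measure_dyadicCube_pos hν n
  have := Fintype.ofFinite {l // 0 < ν (dyadicCube m n l)}
  have := nonempty_measure_dyadicCube_pos (ν := ν) n
  rw [betaN_eq]
  refine div_le_of_le_mul₀ (by positivity) (Nat.cast_nonneg m) ?_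
  exact (log_sum_rpow_le_log_card (fun l => ENNReal.toReal_pos l.2.ne' (measure_ne_top ν _))
    (fun _ => measureReal_le_one) hs).trans (log_card_measure_dyadicCube_pos_le hν n)

theorem neg_mul_le_betaN (hν : ν (unitCube m) = 1) (n : ℕ) {s : ℝ} (hs : 0 ≤ s) :
    -(m * s) ≤ betaN m ν n s := by
  have := finite_measure_dyadicCube_pos hν n
  have := Fintype.ofFinite {l // 0 < ν (dyadicCube m n l)}
  have := nonempty_measure_dyadicCube_pos (ν := ν) n
  rw [betaN_eq, neg_le, ← neg_div]
  refine div_le_of_le_mul₀ (by positivity) (by positivity) ?_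
  have hlower := neg_mul_log_card_le_log_sum_rpow
    (fun l => ENNReal.toReal_pos l.2.ne' (measure_ne_top ν _))
    (one_le_sum_measure_dyadicCube_pos n) hs
  have hcard := mul_le_mul_of_nonneg_left (log_card_measure_dyadicCube_pos_le hν n) hs
  linarith

theorem convexOn_lqSpectrum (hν : ν (unitCube m) = 1) : ConvexOn ℝ (Ici 0) (lqSpectrum m ν) :=
  convexOn_limsup (fun n => (convexOn_betaN hν n).subset (subset_univ _) (convex_Ici 0))
    (fun _ hs => isBoundedUnder_of ⟨m, fun n => betaN_le hν n hs⟩)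
    (fun s hs => isBoundedUnder_of ⟨-(m * s), fun n => neg_mul_le_betaN hν n hs⟩)

theorem continuousOn_lqSpectrum (hν : ν (unitCube m) = 1) :
    ContinuousOn (lqSpectrum m ν) (Ioi 0) := by
  simpa using (convexOn_lqSpectrum hν).continuousOn_interior

end Spectrum

theorem statement5_general (m : ℕ) (ν : Measure (Fin m → ℝ))
    [IsProbabilityMeasure ν] (hν : ν (unitCube m) = 1) (b : ℝ)
    (hsb : 0 < sb m ν b) :
    lqSpectrum m ν (sb m ν b) = b * sb m ν b :=
  sub_eq_zero.mp <| apply_sInf_setOf_nonpos_eq_zero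
    ((continuousOn_lqSpectrum hν).sub (continuousOn_const.mul continuousOn_id)) hsb

/-- **Lemma 2.4, second part**: if `s_b > 0` then `β_ν(s_b) = b · s_b`. -/
theorem statement5 (m : ℕ) (hm : 0 < m) (ν : Measure (Fin m → ℝ))
    [IsProbabilityMeasure ν] (hν : ν (unitCube m) = 1) (b : ℝ) (hb : 0 < b)
    (hsb : 0 < sb m ν b) :
    lqSpectrum m ν (sb m ν b) = b * sb m ν b :=
  statement5_general m ν hν b hsb
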